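/- There exists a connected multigraph X (with parallel edges allowed) such that Aut(X) does not embed into Aut(Jac(X)); for example, the graph with a central vertex joined to each of two outer vertices by three parallel edges has |Aut(X)| = 72 while Jac(X) ≅ ℤ/3 × ℤ/3 and |Aut(Jac(X))| = |GL₂(𝔽₃)| = 48. -/

import Mathlib

/-- A multigraph in the dart model: a finite nonempty set of darts, an involution
reversing darts, and an incidence map assigning to each dart its initial vertex.
Semiedges (fixed darts), loops and parallel edges are allowed. -/
structure Multigraph where
  D : Type
  V : Type
  instFintypeD : Fintype D
  instDecEqD : DecidableEq D
  instNonemptyD : Nonempty D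
  instFintypeV : Fintype V
  instDecEqV : DecidableEq V
  inv : D → D
  inv_inv : ∀ x, inv (inv x) = x
  vtx : D → V
  vtx_surj : Function.Surjective vtx

attribute [instance] Multigraph.instFintypeD Multigraph.instDecEqD
  Multigraph.instNonemptyD Multigraph.instFintypeV Multigraph.instDecEqV

namespace Multigraph

variable (X : Multigraph)

/-- The darts emanating from a vertex. -/
def dartsAt (v : X.V) : Finset X.D := Finset.univ.filter (fun x => X.vtx x = v)

/-- One step along a dart belonging to the set `P` of allowed darts. -/
def step (P : Set X.D) (u v : X.V) : Prop :=
  ∃ x, x ∈ P ∧ X.vtx x = u ∧ X.vtx (X.inv x) = v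

/-- Any two vertices are joined by a walk using only darts from `P`. -/
def PreconnectedOn (P : Set X.D) : Prop :=
  ∀ u v : X.V, Relation.ReflTransGen (X.step P) u v

/-- A multigraph is connected if any two vertices are joined by a walk. -/
def Connected : Prop := X.PreconnectedOn Set.univ

/-- Number of edges in an inv-closed set of darts (semiedges count once). -/
def edgeCount (S : Finset X.D) : ℕ :=
  (S.card + (S.filter (fun x => X.inv x = x)).card) / 2

/-- A spanning tree: an inv-closed set of darts which connects all vertices and
has exactly `|V| - 1` edges. -/
def IsSpanningTree (S : Finset X.D) : Prop :=
  (∀ x ∈ S, X.inv x ∈ S) ∧ X.PreconnectedOn ↑S ∧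
    X.edgeCount S = Fintype.card X.V - 1

/-- The number of spanning trees. -/
noncomputable def tau : ℕ := Nat.card {S : Finset X.D // X.IsSpanningTree S}

/-- A simple graph: no loops, no semiedges, no parallel edges. -/
def Simple : Prop :=
  (∀ x, X.vtx x ≠ X.vtx (X.inv x)) ∧
  (∀ x y, X.vtx x = X.vtx y → X.vtx (X.inv x) = X.vtx (X.inv y) → x = y)

/-- `X` is at least `k`-edge-connected: removing fewer than `k` edges
leaves it connected. -/
def EdgeConnectedGE (k : ℕ) : Prop :=
  ∀ S : Finset X.D, (∀ x ∈ S, X.inv x ∈ S) → X.edgeCount S < k →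
    X.PreconnectedOn (↑S)ᶜ

/-- The automorphism group of a multigraph, as a subgroup of the permutations
of the darts: permutations commuting with the dart-reversing involution and
preserving the partition of darts into vertices. -/
def autGroup : Subgroup (Equiv.Perm X.D) where
  carrier := {f | (∀ x, f (X.inv x) = X.inv (f x)) ∧
    ∀ x y, X.vtx x = X.vtx y ↔ X.vtx (f x) = X.vtx (f y)}
  one_mem' := ⟨fun _ => rfl, fun _ _ => Iff.rfl⟩
  mul_mem' := by
    rintro f g ⟨hf1, hf2⟩ ⟨hg1, hg2⟩
    refine ⟨fun x => ?_, fun x y => ?_⟩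
    · simp [Equiv.Perm.mul_apply, hg1, hf1]
    · simp only [Equiv.Perm.mul_apply]
      exact (hg2 x y).trans (hf2 (g x) (g y))
  inv_mem' := by
    rintro f ⟨hf1, hf2⟩
    refine ⟨fun x => f.injective ?_, fun x y => ?_⟩
    · rw [(show ∀ y, f (f⁻¹ y) = y from fun y => (Equiv.eq_symm_apply f).mp rfl), hf1, (show ∀ y, f (f⁻¹ y) = y from fun y => (Equiv.eq_symm_apply f).mp rfl)]
    · have := hf2 (f⁻¹ x) (f⁻¹ y)
      simpa [(show ∀ y, f (f⁻¹ y) = y from fun y => (Equiv.eq_symm_apply f).mp rfl)] using this.symm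

end Multigraph

/-- A covering of multigraphs: a surjective graph homomorphism restricting to a
bijection on the darts at each vertex. -/
structure Covering (X Y : Multigraph) where
  toFun : X.D → Y.D
  surj : Function.Surjective toFun
  map_inv : ∀ x, toFun (X.inv x) = Y.inv (toFun x)
  map_vtx : ∀ x y, X.vtx x = X.vtx y → Y.vtx (toFun x) = Y.vtx (toFun y)
  loc_inj : ∀ x y, X.vtx x = X.vtx y → toFun x = toFun y → x = y
  loc_surj : ∀ x z, Y.vtx z = Y.vtx (toFun x) →
    ∃ y, X.vtx y = X.vtx x ∧ toFun y = z

namespace Covering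

variable {X Y : Multigraph} (ψ : Covering X Y)

/-- The covering is `n`-fold: every fibre has cardinality `n`. -/
def IsNFold (n : ℕ) : Prop := ∀ z : Y.D, Nat.card {x : X.D // ψ.toFun x = z} = n

/-- The group of covering transformations: automorphisms `f` of `X`
with `ψ ∘ f = ψ`. -/
def CT : Subgroup (Equiv.Perm X.D) where
  carrier := {f | f ∈ X.autGroup ∧ ∀ x, ψ.toFun (f x) = ψ.toFun x}
  one_mem' := ⟨X.autGroup.one_mem, fun _ => rfl⟩
  mul_mem' := by
    rintro f g ⟨hf1, hf2⟩ ⟨hg1, hg2⟩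
    exact ⟨X.autGroup.mul_mem hf1 hg1, fun x => by
      simp [Equiv.Perm.mul_apply, hf2, hg2]⟩
  inv_mem' := by
    rintro f ⟨hf1, hf2⟩
    refine ⟨X.autGroup.inv_mem hf1, fun x => ?_⟩
    conv_rhs => rw [← (show f (f⁻¹ x) = x from (Equiv.eq_symm_apply f).mp rfl)]
    rw [hf2]

/-- The covering is regular: the covering transformations act transitively
(hence regularly) on every fibre. -/
def IsRegular : Prop :=
  ∀ x y, ψ.toFun x = ψ.toFun y → ∃ f ∈ ψ.CT, f x = y

end Covering
namespace Multigraph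

variable (X : Multigraph)

/-- The Laplacian of `X` acting on integer divisors (functions on vertices):
`(Δ f) v = Σ_{x ∈ D_v} (f v - f (head of x))`, summing over darts with
multiplicity. -/
def lap : (X.V → ℤ) →+ (X.V → ℤ) :=
  AddMonoidHom.mk'
    (fun f v => ∑ x ∈ X.dartsAt v, (f v - f (X.vtx (X.inv x))))
    (by
      intro f g
      funext v
      simp only [Pi.add_apply]
      rw [← Finset.sum_add_distrib]
      exact Finset.sum_congr rfl fun x _ => by ring)

/-- The group of divisors of degree `0`. -/
def div0 : AddSubgroup (X.V → ℤ) where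
  carrier := {f | ∑ v, f v = 0}
  zero_mem' := by simp
  add_mem' := by
    intro a b ha hb
    simp only [Set.mem_setOf_eq, Pi.add_apply, Finset.sum_add_distrib] at *
    simp [ha, hb]
  neg_mem' := by
    intro a ha
    simp only [Set.mem_setOf_eq, Pi.neg_apply, Finset.sum_neg_distrib] at *
    simp [ha]

/-- The Jacobian (critical group) of `X` as divisors: the degree-zero divisors
modulo the image of the Laplacian, `Jac(X) = Div₀(X)/Δ(Div(X))`. -/
def jacDiv : Type := X.div0 ⧸ (X.lap.range.addSubgroupOf X.div0)

instance : AddCommGroup X.jacDiv :=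
  QuotientAddGroup.Quotient.addCommGroup (X.lap.range.addSubgroupOf X.div0)

end Multigraph

abbrev exV := Option (Fin 2)
abbrev exD := (Fin 2 × Fin 3) × Bool

abbrev Xex : Multigraph where
  D := exD
  V := exV
  instFintypeD := inferInstance
  instDecEqD := inferInstance
  instNonemptyD := inferInstance
  instFintypeV := inferInstance
  instDecEqV := inferInstance
  inv x := (x.1, !x.2)
  inv_inv x := by simp
  vtx x := if x.2 then none else some x.1.1
  vtx_surj := fun v => match v with
    | none => ⟨((0, 0), true), rfl⟩
    | some s => ⟨((s, 0), false), rfl⟩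

@[simp] lemma Xex_vtx (x : exD) : Xex.vtx x = if x.2 then none else some x.1.1 := rfl
@[simp] lemma Xex_inv (x : exD) : Xex.inv x = (x.1, !x.2) := rfl

lemma Xex_conn : Xex.Connected := by
  intro u v
  have hs : ∀ s : Fin 2, Xex.step Set.univ none (some s) :=
    fun s => ⟨((s, 0), true), trivial, rfl, rfl⟩
  have hs' : ∀ s : Fin 2, Xex.step Set.univ (some s) none :=
    fun s => ⟨((s, 0), false), trivial, rfl, rfl⟩
  have h1 : ∀ w : exV, Relation.ReflTransGen (Xex.step Set.univ) none w := by
    rintro (_ | s)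
    · exact .refl
    · exact .single (hs s)
  have h2 : ∀ w : exV, Relation.ReflTransGen (Xex.step Set.univ) w none := by
    rintro (_ | s)
    · exact .refl
    · exact .single (hs' s)
  exact (h2 u).trans (h1 v)

abbrev TT := {g : Equiv.Perm (Fin 2 × Fin 3) // ∀ p q : Fin 2 × Fin 3, p.1 = q.1 ↔ (g p).1 = (g q).1}

lemma lift_mem (g : Equiv.Perm (Fin 2 × Fin 3))
    (hg : ∀ p q : Fin 2 × Fin 3, p.1 = q.1 ↔ (g p).1 = (g q).1) :
    g.prodCongr (Equiv.refl Bool) ∈ Xex.autGroup := by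
  refine ⟨fun x => rfl, ?_⟩
  rintro ⟨p, bp⟩ ⟨q, bq⟩
  cases bp <;> cases bq <;> simp [Prod.map, hg p q]

lemma bool_fix {f : Equiv.Perm exD} (hf : f ∈ Xex.autGroup) : ∀ x : exD, (f x).2 = x.2 := by
  obtain ⟨hf1, hf2⟩ := hf
  have c1 : (Finset.univ.filter (fun y : exD => y.2 = true)).card = 6 := by decide
  have c2 : ∀ t : Fin 2,
      (Finset.univ.filter (fun y : exD => Xex.vtx y = some t)).card = 3 := by decide
  have key : ∀ x : exD, x.2 = true → (f x).2 = true := by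
    intro x hx
    by_contra hfx
    have hfx' : (f x).2 = false := by simpa using hfx
    have hmap : ∀ y ∈ Finset.univ.filter (fun y : exD => y.2 = true),
        f y ∈ Finset.univ.filter (fun y : exD => Xex.vtx y = some (f x).1.1) := by
      intro y hy
      simp only [Finset.mem_filter, Finset.mem_univ, true_and] at hy ⊢
      have hv : Xex.vtx y = Xex.vtx x := by simp [hy, hx]
      have h2 := (hf2 y x).mp hv
      simpa [hfx'] using h2
    have hcard := Finset.card_le_card_of_injOn (fun y => f y) hmap
      (fun a _ b _ h => f.injective h)
    rw [c1, c2] at hcard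
    omega
  intro x
  cases hx : x.2 with
  | true => exact key x hx
  | false =>
    by_contra hfx
    have hfx' : (f x).2 = true := by simpa using hfx
    have hy := key (x.1, true) rfl
    have hv : Xex.vtx (f x) = Xex.vtx (f (x.1, true)) := by simp [hfx', hy]
    have := (hf2 x (x.1, true)).mpr hv
    simp [hx] at this

lemma card_aut : Nat.card Xex.autGroup = 72 := by
  have Φbij : Function.Bijective (fun g : TT =>
      (⟨g.1.prodCongr (Equiv.refl Bool), lift_mem g.1 g.2⟩ : Xex.autGroup)) := by
    constructor
    · rintro ⟨g, hg⟩ ⟨g', hg'⟩ h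
      have h' := congrArg (fun a => (a : Equiv.Perm exD)) (Subtype.mk.injEq .. ▸ h)
      apply Subtype.ext
      apply Equiv.ext
      intro p
      have := congrArg (fun e : Equiv.Perm exD => (e (p, false)).1) (Subtype.ext_iff.mp h)
      simpa using this
    · rintro ⟨f, hf⟩
      have hb := bool_fix hf
      have hb' := bool_fix (Xex.autGroup.inv_mem hf) 
      obtain ⟨hf1, hf2⟩ := hf
      refine ⟨⟨⟨fun p => (f (p, false)).1, fun p => (f⁻¹ (p, false)).1, ?_, ?_⟩, ?_⟩, ?_⟩
      · intro p
        have h : ((f (p, false)).1, false) = f (p, false) := Prod.ext rfl (hb (p, false)).symm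
        show (f⁻¹ ((f (p, false)).1, false)).1 = p
        rw [h]
        simp
      · intro p
        have h : ((f⁻¹ (p, false)).1, false) = f⁻¹ (p, false) := Prod.ext rfl (hb' (p, false)).symm
        show (f ((f⁻¹ (p, false)).1, false)).1 = p
        rw [h]
        simp
      · intro p q
        have key := hf2 (p, false) (q, false)
        have h1 := hb (p, false)
        have h2 := hb (q, false)
        simp only [Xex_vtx, h1, h2] at key
        simpa using key
      · apply Subtype.ext
        apply Equiv.ext
        rintro ⟨p, b⟩
        cases b
        · exact Prod.ext rfl (hb (p, false)).symm
        · show ((f (p, false)).1, true) = f (p, true)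
          have h : (p, true) = Xex.inv (p, false) := rfl
          rw [h, hf1, Xex_inv]
          exact Prod.ext rfl (by simp [hb (p, false)])
  rw [← Nat.card_congr (Equiv.ofBijective _ Φbij), Nat.card_eq_fintype_card]
  decide

lemma dartsAt_some (s : Fin 2) :
    Xex.dartsAt (some s) = {((s, 0), false), ((s, 1), false), ((s, 2), false)} := by
  fin_cases s <;> decide

lemma dartsAt_none :
    Xex.dartsAt none = {((0, 0), true), ((0, 1), true), ((0, 2), true),
      ((1, 0), true), ((1, 1), true), ((1, 2), true)} := by decide

lemma lap_some (g : exV → ℤ) (s : Fin 2) :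
    Xex.lap g (some s) = 3 * (g (some s) - g none) := by
  show ∑ x ∈ Xex.dartsAt (some s), (g (some s) - g (Xex.vtx (Xex.inv x))) = _
  rw [dartsAt_some, Finset.sum_insert (by simp), Finset.sum_insert (by simp),
    Finset.sum_singleton]
  simp only [Xex_inv, Xex_vtx, Bool.not_false, if_pos]
  ring

lemma lap_none (g : exV → ℤ) :
    Xex.lap g none = 3 * (g none - g (some 0)) + 3 * (g none - g (some 1)) := by
  show ∑ x ∈ Xex.dartsAt none, (g none - g (Xex.vtx (Xex.inv x))) = _
  rw [dartsAt_none, Finset.sum_insert (by decide), Finset.sum_insert (by decide),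
    Finset.sum_insert (by decide), Finset.sum_insert (by decide), Finset.sum_insert (by decide),
    Finset.sum_singleton]
  simp only [Xex_inv, Xex_vtx, Bool.not_true, if_neg, Bool.false_eq_true, not_false_iff,
    reduceIte]
  ring

def pi0 : Xex.div0 →+ ZMod 3 × ZMod 3 :=
  AddMonoidHom.mk'
    (fun f => ((((f : exV → ℤ) (some 0) : ℤ) : ZMod 3), (((f : exV → ℤ) (some 1) : ℤ) : ZMod 3)))
    (by intro a b; simp [Prod.ext_iff])

lemma sum_exV (f : exV → ℤ) : ∑ v : exV, f v = f none + f (some 0) + f (some 1) := by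
  rw [Fintype.sum_option, Fin.sum_univ_two]
  ring

lemma pi0_surj : Function.Surjective pi0 := by
  rintro ⟨a, b⟩
  refine ⟨⟨fun v => match v with
    | none => -((a.val : ℤ) + (b.val : ℤ))
    | some s => ![(a.val : ℤ), (b.val : ℤ)] s, ?_⟩, ?_⟩
  · show ∑ v : exV, _ = 0
    rw [sum_exV]
    show -((a.val : ℤ) + (b.val : ℤ)) + ![(a.val : ℤ), (b.val : ℤ)] 0
      + ![(a.val : ℤ), (b.val : ℤ)] 1 = 0
    simp
  · show (((( ![(a.val : ℤ), (b.val : ℤ)] 0 : ℤ) : ZMod 3)),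
      ((( ![(a.val : ℤ), (b.val : ℤ)] 1 : ℤ) : ZMod 3))) = (a, b)
    simp [ZMod.natCast_val, ZMod.cast_id]

lemma ker_pi0 : pi0.ker = Xex.lap.range.addSubgroupOf Xex.div0 := by
  ext g
  obtain ⟨f, hf⟩ := g
  have hsum : f none + f (some 0) + f (some 1) = 0 := by
    rw [← sum_exV]; exact hf
  constructor
  · intro h
    have h' := Prod.ext_iff.mp (AddMonoidHom.mem_ker.mp h)
    obtain ⟨a, ha'⟩ := (ZMod.intCast_zmod_eq_zero_iff_dvd _ 3).mp h'.1
    obtain ⟨b, hb'⟩ := (ZMod.intCast_zmod_eq_zero_iff_dvd _ 3).mp h'.2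
    have ha : f (some 0) = 3 * a := ha'
    have hb : f (some 1) = 3 * b := hb'
    rw [AddSubgroup.mem_addSubgroupOf]
    refine ⟨fun v => match v with
      | none => (0 : ℤ)
      | some s => ![a, b] s, ?_⟩
    funext v
    match v with
    | none =>
      show Xex.lap _ none = f none
      rw [lap_none]
      show 3 * ((0 : ℤ) - ![a, b] 0) + 3 * ((0 : ℤ) - ![a, b] 1) = f none
      simp only [Matrix.cons_val_zero, Matrix.cons_val_one, Matrix.head_cons]
      omega
    | some 0 =>
      show Xex.lap _ (some 0) = f (some 0)
      rw [lap_some]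
      show 3 * (![a, b] 0 - (0 : ℤ)) = f (some 0)
      simp only [Matrix.cons_val_zero]
      omega
    | some 1 =>
      show Xex.lap _ (some 1) = f (some 1)
      rw [lap_some]
      show 3 * (![a, b] 1 - (0 : ℤ)) = f (some 1)
      simp only [Matrix.cons_val_one, Matrix.head_cons, Matrix.cons_val_zero]
      omega
  · intro h
    rw [AddSubgroup.mem_addSubgroupOf] at h
    obtain ⟨g, hg⟩ := h
    rw [AddMonoidHom.mem_ker]
    have h0 : f (some 0) = 3 * (g (some 0) - g none) := by
      rw [← lap_some g 0]; exact (congrFun hg (some 0)).symm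
    have h1 : f (some 1) = 3 * (g (some 1) - g none) := by
      rw [← lap_some g 1]; exact (congrFun hg (some 1)).symm
    show ((((f (some 0) : ℤ) : ZMod 3)), (((f (some 1) : ℤ) : ZMod 3))) = (0, 0)
    rw [h0, h1]
    push_cast
    have h3 : (3 : ZMod 3) = 0 := rfl
    rw [h3]
    simp

noncomputable def jacEquiv : Xex.jacDiv ≃+ ZMod 3 × ZMod 3 :=
  (QuotientAddGroup.quotientAddEquivOfEq ker_pi0.symm).trans
    (QuotientAddGroup.quotientKerEquivOfSurjective pi0 pi0_surj)

def addEquivToLinear :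
    ((Fin 2 → ZMod 3) ≃+ (Fin 2 → ZMod 3)) ≃ ((Fin 2 → ZMod 3) ≃ₗ[ZMod 3] (Fin 2 → ZMod 3)) where
  toFun e :=
    { toFun := e
      map_add' := map_add e
      map_smul' := fun c x => ZMod.map_smul e.toAddMonoidHom c x
      invFun := e.symm
      left_inv := e.left_inv
      right_inv := e.right_inv }
  invFun l := l.toAddEquiv
  left_inv e := by ext x; rfl
  right_inv l := by ext x; rfl

lemma card_addAut : Nat.card (AddAut Xex.jacDiv) = 48 := by
  haveI : Fact (Nat.Prime 3) := ⟨by norm_num⟩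
  have e1 : AddAut Xex.jacDiv ≃+ AddAut (ZMod 3 × ZMod 3) := AddAut.congr jacEquiv
  have e2 : AddAut (ZMod 3 × ZMod 3) ≃+ AddAut (Fin 2 → ZMod 3) :=
    AddAut.congr (LinearEquiv.finTwoArrow (R := ZMod 3) (M := ZMod 3)).toAddEquiv.symm
  have e3 : AddAut (Fin 2 → ZMod 3) ≃ ((Fin 2 → ZMod 3) ≃ₗ[ZMod 3] (Fin 2 → ZMod 3)) :=
    addEquivToLinear
  have e4 := (LinearMap.GeneralLinearGroup.generalLinearEquiv (ZMod 3) (Fin 2 → ZMod 3)).toEquiv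
  have e5 := (Matrix.GeneralLinearGroup.toLin (n := Fin 2) (R := ZMod 3)).toEquiv
  rw [Nat.card_congr e1.toEquiv, Nat.card_congr e2.toEquiv, Nat.card_congr e3,
    Nat.card_congr e4.symm, Nat.card_congr e5.symm, Matrix.card_GL_field]
  rw [ZMod.card]
  decide

/-- There is a connected multigraph `X` whose automorphism group does not embed
into the automorphism group of its Jacobian: the graph with one central vertex
joined to each of two outer vertices by three parallel edges has
`|Aut(X)| = 72`, while `Jac(X) ≅ ℤ/3 × ℤ/3`, whose automorphism group
`GL₂(𝔽₃)` has only `48` elements. -/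
theorem exists_graph_aut_not_embedding_jac :
    ∃ X : Multigraph, X.Connected ∧
      Nat.card X.autGroup = 72 ∧
      Nonempty (X.jacDiv ≃+ (ZMod 3 × ZMod 3)) ∧
      Nat.card (AddAut X.jacDiv) = 48 ∧
      ∀ φ : X.autGroup →* Multiplicative (AddAut X.jacDiv), ¬ Function.Injective φ := by
  refine ⟨Xex, Xex_conn, card_aut, ⟨jacEquiv⟩, card_addAut, ?_⟩
  intro φ hφ
  haveI : Finite (AddAut Xex.jacDiv) :=
    Nat.finite_of_card_ne_zero (by rw [card_addAut]; norm_num)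
  have h : Nat.card Xex.autGroup ≤ Nat.card (AddAut Xex.jacDiv) := Nat.card_le_card_of_injective φ hφ
  rw [card_aut, card_addAut] at h
  omega
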